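/- Let D be a Dedekind domain, let M_1, ..., M_n be distinct maximal ideals of D, let I = M_1^{e_1} ⋯ M_n^{e_n} with e_i positive integers, and let E be a finite integral extension Dedekind domain of D such that for each i there are maximal ideals N_{i,1}, ..., N_{i,s_i} of E over M_i with M_i E_{N_{i,j}} = (N_{i,j} E_{N_{i,j}})^{e_{i,j}}. If the products e_i · e_{i,j} are all equal to a common value t (for all i, j), then I E = (Rad(I E))^t, where Rad denotes the radical. -/

import Mathlib

/-!
Extending `I` to `E` gives `∏_{i,j} N_{i,j}^{e_i e_{i,j}} = (∏_{i,j} N_{i,j})^t`. A product of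
pairwise distinct maximal ideals is their intersection, hence a radical ideal, so it is the
radical of its `t`-th power.
-/

namespace Ideal

variable {R : Type*} [CommRing R]

theorem isRadical_prod_of_isMaximal {ι : Type*} [Fintype ι] {P : ι → Ideal R}
    (hmax : ∀ i, (P i).IsMaximal) (hinj : Function.Injective P) : (∏ i, P i).IsRadical := by
  have hcoprime : ((Finset.univ : Finset ι) : Set ι).Pairwise (Function.onFun IsCoprime P) :=
    fun i _ j _ hij => isCoprime_iff_sup_eq.mpr ((hmax i).coprime_of_ne (hmax j) (hinj.ne hij))
  rw [prod_eq_iInf_of_pairwise_isCoprime hcoprime]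
  exact isRadical_iInf _ fun i => isRadical_iInf _ fun _ => (hmax i).isPrime.isRadical

theorem IsRadical.radical_pow_pow {J : Ideal R} (hJ : J.IsRadical) (t : ℕ) :
    (J ^ t).radical ^ t = J ^ t := by
  rcases t with _ | t
  · simp
  · rw [Ideal.radical_pow _ t.succ_ne_zero, hJ.radical]

theorem map_prod_pow_eq_pow_of_mul_eq {S : Type*} [CommRing S] (f : R →+* S)
    {ι : Type*} [Fintype ι] {κ : ι → Type*} [∀ i, Fintype (κ i)]
    (M : ι → Ideal R) (e : ι → ℕ) (N : (i : ι) → κ i → Ideal S) (eij : (i : ι) → κ i → ℕ)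
    (hfac : ∀ i, (M i).map f = ∏ j, N i j ^ eij i j) {t : ℕ} (ht : ∀ i j, e i * eij i j = t) :
    (∏ i, M i ^ e i).map f = (∏ p : Σ i, κ i, N p.1 p.2) ^ t := by
  rw [show (∏ i, M i ^ e i).map f = ∏ i, (M i ^ e i).map f from map_prod (mapHom f) _ _,
    Fintype.prod_sigma, ← Finset.prod_pow]
  refine Finset.prod_congr rfl fun i _ => ?_
  rw [Ideal.map_pow, hfac i, ← Finset.prod_pow, ← Finset.prod_pow]
  refine Finset.prod_congr rfl fun j _ => ?_
  rw [← pow_mul, mul_comm, ht]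

end Ideal

theorem stmt_2_general (D E : Type*) [CommRing D] [CommRing E] [Algebra D E]
    (n : ℕ) (M : Fin n → Ideal D) (e : Fin n → ℕ)
    (I : Ideal D) (hI : I = ∏ i, M i ^ e i)
    (s : Fin n → ℕ) (N : (i : Fin n) → Fin (s i) → Ideal E)
    (hNmax : ∀ i j, (N i j).IsMaximal)
    (hNdist : ∀ i j i' j', N i j = N i' j' → i = i' ∧ HEq j j')
    (eij : (i : Fin n) → Fin (s i) → ℕ)
    (hfac : ∀ i, (M i).map (algebraMap D E) = ∏ j, N i j ^ eij i j)
    (t : ℕ) (ht : ∀ i j, e i * eij i j = t) :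
    I.map (algebraMap D E) = (I.map (algebraMap D E)).radical ^ t := by
  have hNinj : Function.Injective fun p : Σ i, Fin (s i) => N p.1 p.2 :=
    fun p q h => Sigma.ext_iff.mpr (hNdist p.1 p.2 q.1 q.2 h)
  rw [hI, Ideal.map_prod_pow_eq_pow_of_mul_eq _ M e N eij hfac ht]
  have hrad := Ideal.isRadical_prod_of_isMaximal (fun p : Σ i, Fin (s i) => hNmax p.1 p.2) hNinj
  exact (hrad.radical_pow_pow t).symm

/-- Let `I = M_1^{e_1} ⋯ M_n^{e_n}` for distinct maximal ideals `M_i` of a Dedekind domain `D`,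
and let `E` be a finite integral extension Dedekind domain of `D` whose maximal ideals over
`M_i` are `N_{i,1}, …, N_{i,s_i}` with ramification indices `e_{i,j}` (so that
`M_i E = ∏_j N_{i,j}^{e_{i,j}}`).  If all products `e_i · e_{i,j}` equal a common value `t`,
then `I E = (Rad (I E))^t`. -/
theorem stmt_2 (D E : Type*) [CommRing D] [IsDomain D] [IsDedekindDomain D]
    [CommRing E] [IsDomain E] [IsDedekindDomain E]
    [Algebra D E] [Module.Finite D E] [Algebra.IsIntegral D E]
    (hinj : Function.Injective (algebraMap D E))
    (n : ℕ) (hn : 0 < n) (M : Fin n → Ideal D) (hMmax : ∀ i, (M i).IsMaximal)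
    (hMdist : Function.Injective M)
    (e : Fin n → ℕ) (hepos : ∀ i, 0 < e i)
    (I : Ideal D) (hI : I = ∏ i, M i ^ e i)
    (s : Fin n → ℕ) (N : (i : Fin n) → Fin (s i) → Ideal E)
    (hNmax : ∀ i j, (N i j).IsMaximal)
    (hNdist : ∀ i j i' j', N i j = N i' j' → i = i' ∧ HEq j j')
    (eij : (i : Fin n) → Fin (s i) → ℕ)
    (hfac : ∀ i, (M i).map (algebraMap D E) = ∏ j, N i j ^ eij i j)
    (t : ℕ) (ht : ∀ i j, e i * eij i j = t) :
    I.map (algebraMap D E) = (I.map (algebraMap D E)).radical ^ t :=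
  stmt_2_general D E n M e I hI s N hNmax hNdist eij hfac t ht
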